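/- arXiv:1310.3933 — 6 statements merged into one kernel-verified Lean document; each statement's English description precedes it below -/
import Mathlib

section
/- Let c = (1−x²)²(1+x)(1−x−y)(1−y²)(1+y) in the polynomial ring ℤ[x,y], where x and y are given degree 1, and let c₃ and c₄ denote the homogeneous components of c of degree 3 and degree 4 respectively. Then c₃·c₄ + 2·x⁴y³ lies in the ideal of ℤ[x,y] generated by x⁵ and y⁴ + xy³; equivalently, c₃·c₄ is congruent to −2·x⁴y³ modulo that ideal. -/
open MvPolynomial

/-- `x` in `ℤ[x,y]`. -/
noncomputable def px : MvPolynomial (Fin 2) ℤ := X 0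
/-- `y` in `ℤ[x,y]`. -/
noncomputable def py : MvPolynomial (Fin 2) ℤ := X 1

/-- The total Chern class `c = (1−x²)²(1+x)(1−x−y)(1−y²)(1+y)` of `M(P⁷, λ₂^{⟨7⟩})`. -/
noncomputable def c7 : MvPolynomial (Fin 2) ℤ :=
  (1 - px ^ 2) ^ 2 * (1 + px) * (1 - px - py) * (1 - py ^ 2) * (1 + py)

/-!
Since `homogeneousComponent n (p * X i) = homogeneousComponent (n - 1) p * X i` for `n ≥ 1`,
peeling off the factors of `c` one at a time computes `c₃` and `c₄` explicitly. The membership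
is then a polynomial identity, with cofactors obtained by reducing `c₃c₄ + 2x⁴y³` modulo `x⁵`
and `y⁴ + xy³`.
-/

namespace MvPolynomial

variable {σ R : Type*} [CommSemiring R]

theorem homogeneousComponent_one (n : ℕ) :
    homogeneousComponent n (1 : MvPolynomial σ R) = if n = 0 then 1 else 0 :=
  homogeneousComponent_of_mem (isHomogeneous_one σ R)

attribute [local instance] gradedAlgebra in
theorem IsHomogeneous.homogeneousComponent_mul_right {p q : MvPolynomial σ R} {m : ℕ}
    (hq : q.IsHomogeneous m) (n : ℕ) :
    homogeneousComponent n (p * q) =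
      if m ≤ n then homogeneousComponent (n - m) p * q else 0 := by
  simp_rw [← decomposition.decompose'_apply]
  exact DirectSum.coe_decompose_mul_of_right_mem _ n ((mem_homogeneousSubmodule _ _).mpr hq)

theorem homogeneousComponent_mul_X (p : MvPolynomial σ R) (i : σ) (n : ℕ) :
    homogeneousComponent n (p * X i) =
      if 1 ≤ n then homogeneousComponent (n - 1) p * X i else 0 :=
  (isHomogeneous_X R i).homogeneousComponent_mul_right n

end MvPolynomial

theorem homogeneousComponent_three_c7 :
    homogeneousComponent 3 c7 = -(px ^ 2 * py) - px * py ^ 2 := by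
  simp only [c7, px, py, sq, mul_add, mul_sub, mul_one, ← mul_assoc, map_add, map_sub,
    homogeneousComponent_one, homogeneousComponent_of_mem (isHomogeneous_X ℤ _),
    homogeneousComponent_mul_X, Nat.reduceLeDiff, Nat.reduceSub, Nat.reduceEqDiff, reduceIte]
  ring

theorem homogeneousComponent_four_c7 :
    homogeneousComponent 4 c7 =
      py ^ 4 + 5 * px ^ 2 * py ^ 2 + px * py ^ 3 + 3 * px ^ 4 + 2 * px ^ 3 * py := by
  simp only [c7, px, py, sq, mul_add, mul_sub, mul_one, ← mul_assoc, map_add, map_sub,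
    homogeneousComponent_one, homogeneousComponent_of_mem (isHomogeneous_X ℤ _),
    homogeneousComponent_mul_X, Nat.reduceLeDiff, Nat.reduceSub, Nat.reduceEqDiff, reduceIte]
  ring

/-- The homogeneous components `c₃`, `c₄` of `c` (with `x`, `y` of degree 1) satisfy
`c₃ · c₄ ≡ −2·x⁴y³` modulo the ideal `⟨x⁵, y⁴ + xy³⟩` of `ℤ[x,y]`. -/
theorem stmt0 :
    homogeneousComponent 3 c7 * homogeneousComponent 4 c7 + 2 * px ^ 4 * py ^ 3 ∈
      Ideal.span ({px ^ 5, py ^ 4 + px * py ^ 3} : Set (MvPolynomial (Fin 2) ℤ)) := by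
  rw [homogeneousComponent_three_c7, homogeneousComponent_four_c7, Ideal.mem_span_pair]
  exact ⟨-3 * px * py - 5 * py ^ 2, -(px ^ 2 * py) - 5 * px ^ 3 - px * py ^ 2, by ring⟩
end

section
/- For every integer m, if m·x³y⁵ lies in the ideal of ℤ[x,y] generated by x⁴ and y⁴(x−y)², then m = 0. In particular x³y⁵ is not in that ideal, so its image in ℤ[x,y]/⟨x⁴, y⁴(x−y)²⟩ generates an infinite cyclic subgroup. -/
/-!
The ℤ-linear functional `p ↦ c₃₅ + 2 c₂₆ + 3 c₁₇ + 4 c₀₈` on the coefficients of `p` vanishes on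
the ideal `⟨x⁴, y⁴(x−y)²⟩` and takes the value `m` on `m·x³y⁵`.
-/

open MvPolynomial

/-- The ideal `⟨x⁴, y⁴(x−y)²⟩` of `ℤ[x,y]`. -/
noncomputable def I8 : Ideal (MvPolynomial (Fin 2) ℤ) :=
  Ideal.span ({px ^ 4, py ^ 4 * (px - py) ^ 2} : Set (MvPolynomial (Fin 2) ℤ))

noncomputable def exponent (i j : ℕ) : Fin 2 →₀ ℕ := Finsupp.single 0 i + Finsupp.single 1 j

lemma exponent_le_exponent_iff {s t i j : ℕ} : exponent s t ≤ exponent i j ↔ s ≤ i ∧ t ≤ j := by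
  simp [exponent, Finsupp.le_def, Fin.forall_fin_two]

lemma exponent_inj {s t i j : ℕ} : exponent s t = exponent i j ↔ s = i ∧ t = j := by
  simp [exponent, Finsupp.ext_iff, Fin.forall_fin_two]

lemma exponent_sub_exponent (s t i j : ℕ) :
    exponent i j - exponent s t = exponent (i - s) (j - t) := by
  ext k
  fin_cases k <;> simp [exponent]

lemma monomial_exponent (i j : ℕ) (r : ℤ) : monomial (exponent i j) r = C r * px ^ i * py ^ j := by
  rw [px, py, X_pow_eq_monomial, X_pow_eq_monomial, mul_assoc, monomial_mul, C_mul_monomial,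
    mul_one, mul_one, exponent]

lemma coeff_exponent_mul_monomial {R : Type*} [CommSemiring R] (i j s t : ℕ) (r : R)
    (p : MvPolynomial (Fin 2) R) :
    coeff (exponent i j) (p * monomial (exponent s t) r) =
      if s ≤ i ∧ t ≤ j then coeff (exponent (i - s) (j - t)) p * r else 0 := by
  rw [coeff_mul_monomial', exponent_sub_exponent]
  simp [exponent_le_exponent_iff]

lemma px_pow_four_eq_monomial : px ^ 4 = monomial (exponent 4 0) (1 : ℤ) := by
  simp [monomial_exponent]

lemma py_pow_four_mul_sub_sq_eq : py ^ 4 * (px - py) ^ 2 =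
    monomial (exponent 2 4) 1 - monomial (exponent 1 5) 2 + monomial (exponent 0 6) (1 : ℤ) := by
  simp only [monomial_exponent, map_one, map_ofNat]
  ring

/-- The weights `k + 1` on `x^(3-k) y^(5+k)` are the coefficients of `(1 - t)⁻²`; being linear in
`k`, they are killed by the second difference that multiplication by `y⁴(x-y)²` produces. -/
noncomputable def topCoeff : MvPolynomial (Fin 2) ℤ →ₗ[ℤ] ℤ :=
  lcoeff ℤ (exponent 3 5) + 2 • lcoeff ℤ (exponent 2 6) + 3 • lcoeff ℤ (exponent 1 7) +
    4 • lcoeff ℤ (exponent 0 8)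

lemma topCoeff_apply (p : MvPolynomial (Fin 2) ℤ) : topCoeff p =
    coeff (exponent 3 5) p + 2 * coeff (exponent 2 6) p + 3 * coeff (exponent 1 7) p +
      4 * coeff (exponent 0 8) p := by
  simp [topCoeff]

lemma topCoeff_mul_px_pow_four (a : MvPolynomial (Fin 2) ℤ) : topCoeff (a * px ^ 4) = 0 := by
  simp [topCoeff_apply, px_pow_four_eq_monomial, coeff_exponent_mul_monomial]

lemma topCoeff_mul_py_pow_four_mul_sub_sq (b : MvPolynomial (Fin 2) ℤ) :
    topCoeff (b * (py ^ 4 * (px - py) ^ 2)) = 0 := by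
  simp only [topCoeff_apply, py_pow_four_mul_sub_sq_eq, mul_add, mul_sub, coeff_add, coeff_sub,
    coeff_exponent_mul_monomial]
  norm_num
  ring

lemma topCoeff_C_mul (m : ℤ) : topCoeff (C m * (px ^ 3 * py ^ 5)) = m := by
  rw [← mul_assoc, ← monomial_exponent]
  simp [topCoeff_apply, coeff_monomial, exponent_inj]

lemma topCoeff_eq_zero_of_mem_I8 {p : MvPolynomial (Fin 2) ℤ} (hp : p ∈ I8) : topCoeff p = 0 := by
  obtain ⟨a, b, rfl⟩ := Ideal.mem_span_pair.mp hp
  rw [map_add, topCoeff_mul_px_pow_four, topCoeff_mul_py_pow_four_mul_sub_sq, add_zero]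

/-- For every integer `m`, if `m·x³y⁵ ∈ ⟨x⁴, y⁴(x−y)²⟩` then `m = 0`; in particular `x³y⁵`
is not in that ideal and its image in the quotient `ℤ[x,y]/⟨x⁴, y⁴(x−y)²⟩` generates an
infinite cyclic subgroup (i.e. `m ↦ m • [x³y⁵]` is injective). -/
theorem stmt3 :
    (∀ m : ℤ, C m * (px ^ 3 * py ^ 5) ∈ I8 → m = 0) ∧
    px ^ 3 * py ^ 5 ∉ I8 ∧
    Function.Injective (fun m : ℤ => m • Ideal.Quotient.mk I8 (px ^ 3 * py ^ 5)) := by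
  have torsionFree (m : ℤ) (hm : C m * (px ^ 3 * py ^ 5) ∈ I8) : m = 0 :=
    (topCoeff_C_mul m).symm.trans (topCoeff_eq_zero_of_mem_I8 hm)
  refine ⟨torsionFree, fun h => one_ne_zero (torsionFree 1 (by simpa using h)), ?_⟩
  refine (injective_iff_map_eq_zero (zmultiplesHom _ (Ideal.Quotient.mk I8 (px ^ 3 * py ^ 5)))).mpr
    fun m hm => torsionFree m ?_
  rwa [zmultiplesHom_apply, ← map_zsmul, Ideal.Quotient.eq_zero_iff_mem, zsmul_eq_mul,
    ← eq_intCast C] at hm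
end

section
/- Let c = (1−x²)²(1−y²)⁴(1−(x−y)²) in the polynomial ring ℤ[x,y], where x and y are given degree 1, and let c₆ denote the homogeneous component of c of degree 6. Then c₆ − (−10y⁶ + 12xy⁵ − 26x²y⁴ + 16x³y³) lies in the ideal of ℤ[x,y] generated by x⁴ and y⁸(x−y)². -/
/-!
Each factor `1 - ℓ²` of `c` is `1 + r` with `r = -ℓ²` homogeneous of degree 2, so
`c = ∏ (1 + r) = ∑ₖ eₖ(r)` with `eₖ(r)` homogeneous of degree `2k`. Hence `c₆ = e₃(r)` for the
seven degree-2 roots `-x², -x², -y², -y², -y², -y², -(x-y)²`, and expanding `e₃` gives the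
stated polynomial plus `x⁴(-x² + 2xy - 13y²)`.
-/

open MvPolynomial

/-- The total Chern class `c = (1−x²)²(1−y²)⁴(1−(x−y)²)` of `M(P¹², λ₂^{⟨12⟩})`. -/
noncomputable def c12 : MvPolynomial (Fin 2) ℤ :=
  (1 - px ^ 2) ^ 2 * (1 - py ^ 2) ^ 4 * (1 - (px - py) ^ 2)

namespace Multiset

variable {R : Type*} [CommSemiring R]

theorem prod_map_one_add_eq_sum_esymm (s : Multiset R) :
    (s.map (1 + ·)).prod = ∑ j ∈ Finset.range (card s + 1), s.esymm j := by
  simpa [Polynomial.eval_multiset_prod, Polynomial.eval_finsetSum, map_map, Function.comp_def]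
    using congrArg (Polynomial.eval 1) (prod_X_add_C_eq_sum_esymm s)

theorem esymm_zero (s : Multiset R) : s.esymm 0 = 1 := by
  simp [esymm]

theorem esymm_eq_zero_of_card_lt {s : Multiset R} {k : ℕ} (h : card s < k) : s.esymm k = 0 := by
  simp [esymm, powersetCard_eq_empty k h]

theorem esymm_zero_succ (k : ℕ) : (0 : Multiset R).esymm (k + 1) = 0 :=
  esymm_eq_zero_of_card_lt (by simp)

theorem esymm_cons_succ (a : R) (s : Multiset R) (k : ℕ) :
    (a ::ₘ s).esymm (k + 1) = s.esymm (k + 1) + a * s.esymm k := by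
  simp [esymm, powersetCard_cons, sum_map_mul_left]

end Multiset

namespace MvPolynomial

variable {σ R : Type*} [CommSemiring R] {m : ℕ} {s : Multiset (MvPolynomial σ R)}

theorem IsHomogeneous.multiset_prod (hs : ∀ p ∈ s, p.IsHomogeneous m) :
    s.prod.IsHomogeneous (m * Multiset.card s) := by
  induction s using Multiset.induction_on with
  | empty => simpa using isHomogeneous_one σ R
  | cons a s ih =>
    rw [Multiset.prod_cons, Multiset.card_cons, mul_add_one, add_comm]
    exact (hs a (Multiset.mem_cons_self a s)).mul
      (ih fun p hp => hs p (Multiset.mem_cons_of_mem hp))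

theorem isHomogeneous_multiset_esymm (hs : ∀ p ∈ s, p.IsHomogeneous m) (k : ℕ) :
    (s.esymm k).IsHomogeneous (m * k) := by
  refine multiset_sum_mem (S := homogeneousSubmodule σ R (m * k)) _ fun p hp => ?_
  obtain ⟨t, ht, rfl⟩ := Multiset.mem_map.1 hp
  obtain ⟨hts, htk⟩ := Multiset.mem_powersetCard.1 ht
  simpa [htk] using IsHomogeneous.multiset_prod fun p hp => hs p (Multiset.mem_of_le hts hp)

theorem homogeneousComponent_prod_one_add (hm : m ≠ 0) (hs : ∀ p ∈ s, p.IsHomogeneous m)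
    (k : ℕ) : homogeneousComponent (m * k) (s.map (1 + ·)).prod = s.esymm k := by
  rw [Multiset.prod_map_one_add_eq_sum_esymm, map_sum, Finset.sum_eq_single k]
  · exact (homogeneousComponent_of_mem (isHomogeneous_multiset_esymm hs k)).trans (if_pos rfl)
  · intro j _ hjk
    rw [homogeneousComponent_of_mem (isHomogeneous_multiset_esymm hs j),
      if_neg (by simpa [hm] using hjk.symm)]
  · intro hk
    rw [Multiset.esymm_eq_zero_of_card_lt (by simpa [Nat.lt_succ_iff] using hk), map_zero]

end MvPolynomial

noncomputable def c12Roots : Multiset (MvPolynomial (Fin 2) ℤ) :=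
  -(px - py) ^ 2 ::ₘ (Multiset.replicate 2 (-px ^ 2) + Multiset.replicate 4 (-py ^ 2))

theorem c12_eq_prod_one_add : c12 = (c12Roots.map (1 + ·)).prod := by
  simp only [c12, c12Roots, Multiset.map_cons, Multiset.map_add, Multiset.map_replicate,
    Multiset.prod_cons, Multiset.prod_add, Multiset.prod_replicate]
  ring

theorem isHomogeneous_of_mem_c12Roots : ∀ r ∈ c12Roots, r.IsHomogeneous 2 := by
  have hx : px.IsHomogeneous 1 := isHomogeneous_X ℤ 0
  have hy : py.IsHomogeneous 1 := isHomogeneous_X ℤ 1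
  simp only [c12Roots, Multiset.mem_cons, Multiset.mem_add, Multiset.mem_replicate]
  rintro r (rfl | ⟨-, rfl⟩ | ⟨-, rfl⟩)
  · exact ((hx.sub hy).pow 2).neg
  · exact (hx.pow 2).neg
  · exact (hy.pow 2).neg

theorem esymm_c12Roots_three : c12Roots.esymm 3 =
    -px ^ 6 + 2 * px ^ 5 * py - 13 * px ^ 4 * py ^ 2 + 16 * px ^ 3 * py ^ 3
      - 26 * px ^ 2 * py ^ 4 + 12 * px * py ^ 5 - 10 * py ^ 6 := by
  simp only [c12Roots, Multiset.replicate_succ, Multiset.replicate_zero, Multiset.cons_add,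
    Multiset.zero_add, Multiset.esymm_cons_succ, Multiset.esymm_zero,
    Multiset.esymm_zero_succ]
  ring

/-- The homogeneous component `c₆` of `c` (with `x`, `y` of degree 1) satisfies
`c₆ ≡ −10y⁶ + 12xy⁵ − 26x²y⁴ + 16x³y³` modulo the ideal `⟨x⁴, y⁸(x−y)²⟩` of `ℤ[x,y]`. -/
theorem stmt4 :
    homogeneousComponent 6 c12 -
        (-10 * py ^ 6 + 12 * px * py ^ 5 - 26 * px ^ 2 * py ^ 4 + 16 * px ^ 3 * py ^ 3) ∈
      Ideal.span ({px ^ 4, py ^ 8 * (px - py) ^ 2} : Set (MvPolynomial (Fin 2) ℤ)) := by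
  have hc6 : homogeneousComponent 6 c12 = c12Roots.esymm 3 := by
    rw [c12_eq_prod_one_add]
    exact homogeneousComponent_prod_one_add two_ne_zero isHomogeneous_of_mem_c12Roots 3
  rw [hc6, esymm_c12Roots_three]
  convert Ideal.mul_mem_left _ (-px ^ 2 + 2 * px * py - 13 * py ^ 2)
    (Ideal.subset_span (Set.mem_insert (px ^ 4) _)) using 1
  ring
end

section
/- For every integer m, if m·x³y⁹ lies in the ideal of ℤ[x,y] generated by x⁴ and y⁸(x−y)², then m = 0. In particular x³y⁹ is not in that ideal, so its image in ℤ[x,y]/⟨x⁴, y⁸(x−y)²⟩ generates an infinite cyclic subgroup. -/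
open MvPolynomial

/-- The ideal `⟨x⁴, y⁸(x−y)²⟩` of `ℤ[x,y]`. -/
noncomputable def I12 : Ideal (MvPolynomial (Fin 2) ℤ) :=
  Ideal.span ({px ^ 4, py ^ 8 * (px - py) ^ 2} : Set (MvPolynomial (Fin 2) ℤ))

/-!
There is an additive functional on the degree-12 part of `ℤ[x,y]` that kills the ideal and takes
the value `1` on `x³y⁹`; applying it to `m·x³y⁹` gives `m`. On the monomials `xⁱy¹²⁻ⁱ` it is
forced: it vanishes for `i ≥ 4` because of `x⁴`, and the multiples `xᵃy¹⁰⁻ᵃ·(x−y)²` of `y⁸(x−y)²`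
make the weights an arithmetic progression in `i`, so they are `4 − i`. Coefficients are read off
after substituting `x ↦ X`, `y ↦ C X` into `ℤ[y][x]`.
-/

namespace Polynomial

variable {R : Type*} [CommRing R]

/-- The outer variable plays `x` and the inner one `y`. -/
noncomputable def residue (f : R[X][X]) : R :=
  4 * (f.coeff 0).coeff 12 + 3 * (f.coeff 1).coeff 11 + 2 * (f.coeff 2).coeff 10 +
    (f.coeff 3).coeff 9

theorem residue_add (f g : R[X][X]) : residue (f + g) = residue f + residue g := by
  simp only [residue, coeff_add]
  ring

theorem residue_mul_X_pow_four (p : R[X][X]) : residue (p * X ^ 4) = 0 := by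
  simp [residue, coeff_mul_X_pow']

theorem residue_mul_relation (q : R[X][X]) :
    residue (q * (C X ^ 8 * (X - C X) ^ 2)) = 0 := by
  have h : q * (C X ^ 8 * (X - C X) ^ 2) =
      q * X ^ 2 * C (X ^ 8) - 2 * (q * X ^ 1 * C (X ^ 9)) + q * C (X ^ 10) := by
    simp only [map_pow]
    ring
  rw [h]
  simp only [residue, coeff_add, coeff_sub, coeff_mul_C, coeff_mul_X_pow', coeff_ofNat_mul,
    Nat.reduceLeDiff, Nat.reduceSub, if_true, if_false, coeff_zero]
  ring

theorem residue_C_mul_X_pow_three_mul_C_X_pow_nine (m : R) :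
    residue (C (C m) * (X ^ 3 * C X ^ 9)) = m := by
  have h : C (C m) * (X ^ 3 * C X ^ 9) = C (C m * X ^ 9) * X ^ 3 := by
    simp only [map_mul, map_pow]
    ring
  rw [h, residue]
  simp only [coeff_C_mul_X_pow, Nat.reduceEqDiff, if_true, if_false, coeff_zero]
  ring

end Polynomial

section

variable (R : Type*) [CommRing R]

noncomputable def toIterated : MvPolynomial (Fin 2) R →ₐ[R] Polynomial (Polynomial R) :=
  aeval ![Polynomial.X, Polynomial.C Polynomial.X]

theorem toIterated_C (r : R) :
    toIterated R (C r) = Polynomial.C (Polynomial.C r) := by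
  rw [toIterated, algHom_C, Polynomial.algebraMap_apply, Polynomial.algebraMap_apply,
    Algebra.algebraMap_self, RingHom.id_apply]

end

theorem toIterated_px : toIterated ℤ px = Polynomial.X := by simp [toIterated, px]

theorem toIterated_py : toIterated ℤ py = Polynomial.C Polynomial.X := by simp [toIterated, py]

theorem residue_toIterated_of_mem_I12 {f : MvPolynomial (Fin 2) ℤ} (hf : f ∈ I12) :
    (toIterated ℤ f).residue = 0 := by
  obtain ⟨p, q, rfl⟩ := Ideal.mem_span_pair.mp hf
  simp only [map_add, map_mul, map_pow, map_sub, toIterated_px, toIterated_py]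
  rw [Polynomial.residue_add, Polynomial.residue_mul_X_pow_four, Polynomial.residue_mul_relation,
    add_zero]

theorem eq_zero_of_C_mul_mem_I12 {m : ℤ} (h : C m * (px ^ 3 * py ^ 9) ∈ I12) : m = 0 := by
  have hres := residue_toIterated_of_mem_I12 h
  rwa [map_mul, map_mul, map_pow, map_pow, toIterated_px, toIterated_py, toIterated_C,
    Polynomial.residue_C_mul_X_pow_three_mul_C_X_pow_nine] at hres

/-- For every integer `m`, if `m·x³y⁹ ∈ ⟨x⁴, y⁸(x−y)²⟩` then `m = 0`; in particular `x³y⁹`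
is not in that ideal and its image in the quotient `ℤ[x,y]/⟨x⁴, y⁸(x−y)²⟩` generates an
infinite cyclic subgroup (i.e. `m ↦ m • [x³y⁹]` is injective). -/
theorem stmt6 :
    (∀ m : ℤ, C m * (px ^ 3 * py ^ 9) ∈ I12 → m = 0) ∧
    px ^ 3 * py ^ 9 ∉ I12 ∧
    Function.Injective (fun m : ℤ => m • Ideal.Quotient.mk I12 (px ^ 3 * py ^ 9)) := by
  refine ⟨fun m => eq_zero_of_C_mul_mem_I12, fun h => one_ne_zero (α := ℤ) ?_, fun a b hab => ?_⟩
  · exact eq_zero_of_C_mul_mem_I12 (by rwa [C_1, one_mul])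
  · have hmem : C (a - b) * (px ^ 3 * py ^ 9) ∈ I12 := by
      rw [← smul_eq_C_mul, ← Ideal.Quotient.eq_zero_iff_mem, map_zsmul, sub_smul]
      exact sub_eq_zero.mpr hab
    exact sub_eq_zero.mp (eq_zero_of_C_mul_mem_I12 hmem)
end

section
/- The additive submonoid of ℕ generated by the set {4a+5 : a ∈ ℕ} ∪ {8b+11 : b ∈ ℕ} consists exactly of those natural numbers n with n ∉ {1, 2, 3, 4, 6, 7, 8, 12}. That is: every natural number other than 1, 2, 3, 4, 6, 7, 8, 12 can be written as a finite sum of numbers each of the form 4a+5 or 8b+11 (the empty sum giving 0), and none of 1, 2, 3, 4, 6, 7, 8, 12 can be so written. -/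
/-!
Every generator `4a+5` or `8b+11` avoids the gaps `1, 2, 3, 4, 6, 7, 8, 12`, and so does any sum of
two non-gaps (a nonzero non-gap is at least `5`, and `12` is not a sum of two of them), so the
closure misses the gaps. Conversely `0, 5, 9, 10, 11` and the five consecutive numbers `13, …, 17`
are sums of generators; adding copies of the generator `5` to the latter reaches every `n ≥ 13`.
-/

theorem AddSubmonoid.nat_mem_of_le_of_Ico_subset {S : AddSubmonoid ℕ} {a N : ℕ} (ha₀ : 0 < a)
    (ha : a ∈ S) (hwin : Set.Ico N (N + a) ⊆ S) {n : ℕ} (hn : N ≤ n) : n ∈ S := by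
  induction n using Nat.strong_induction_on with
  | _ n ih =>
    rcases lt_or_ge n (N + a) with hlt | hge
    · exact hwin ⟨hn, hlt⟩
    · have hsub : n - a ∈ S := ih (n - a) (by omega) (by omega)
      simpa [Nat.sub_add_cancel (show a ≤ n by omega)] using add_mem hsub ha

def stongDegrees : Set ℕ :=
  {m : ℕ | ∃ a : ℕ, m = 4 * a + 5} ∪ {m : ℕ | ∃ b : ℕ, m = 8 * b + 11}

def stongGaps : Set ℕ := {1, 2, 3, 4, 6, 7, 8, 12}

theorem notMem_stongGaps_iff {n : ℕ} :
    n ∉ stongGaps ↔ n = 0 ∨ 5 ≤ n ∧ n ≠ 6 ∧ n ≠ 7 ∧ n ≠ 8 ∧ n ≠ 12 := by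
  simp only [stongGaps, Set.mem_insert_iff, Set.mem_singleton_iff, not_or]
  omega

def realizableDims : AddSubmonoid ℕ where
  carrier := stongGapsᶜ
  zero_mem' := by simp [stongGaps]
  add_mem' {m n} hm hn := by
    simp only [Set.mem_compl_iff, notMem_stongGaps_iff] at hm hn ⊢
    omega

theorem mem_realizableDims {n : ℕ} : n ∈ realizableDims ↔ n ∉ stongGaps := Iff.rfl

theorem stongDegrees_subset_realizableDims : stongDegrees ⊆ realizableDims := by
  rintro m (⟨a, rfl⟩ | ⟨b, rfl⟩) <;>
    rw [SetLike.mem_coe, mem_realizableDims, notMem_stongGaps_iff] <;> omega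

theorem realizableDims_le_closure_stongDegrees :
    realizableDims ≤ AddSubmonoid.closure stongDegrees := by
  have hgen₁ (a : ℕ) : 4 * a + 5 ∈ AddSubmonoid.closure stongDegrees :=
    AddSubmonoid.subset_closure (Or.inl ⟨a, rfl⟩)
  have h11 : 11 ∈ AddSubmonoid.closure stongDegrees :=
    AddSubmonoid.subset_closure (Or.inr ⟨0, rfl⟩)
  have h5 := hgen₁ 0
  have h9 := hgen₁ 1
  have h10 := add_mem h5 h5
  have hwin : Set.Ico 13 (13 + 5) ⊆ AddSubmonoid.closure stongDegrees := by
    rintro m ⟨hlo, hhi⟩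
    interval_cases m
    exacts [hgen₁ 2, add_mem h5 h9, add_mem h5 h10, add_mem h5 h11, hgen₁ 3]
  intro n hn
  rcases lt_or_ge n 13 with hlt | hge
  · interval_cases n <;>
      first | exact zero_mem _ | assumption | simp [mem_realizableDims, stongGaps] at hn
  · exact AddSubmonoid.nat_mem_of_le_of_Ico_subset (by norm_num) h5 hwin hge

theorem closure_stongDegrees : AddSubmonoid.closure stongDegrees = realizableDims :=
  le_antisymm (AddSubmonoid.closure_le.mpr stongDegrees_subset_realizableDims)
    realizableDims_le_closure_stongDegrees

/-- The additive submonoid of `ℕ` generated by the numbers `4a+5` and `8b+11` (for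
`a, b ∈ ℕ`) consists exactly of the natural numbers not among `1, 2, 3, 4, 6, 7, 8, 12`. -/
theorem stmt7 :
    ∀ n : ℕ,
      n ∈ AddSubmonoid.closure
          ({m : ℕ | ∃ a : ℕ, m = 4 * a + 5} ∪ {m : ℕ | ∃ b : ℕ, m = 8 * b + 11}) ↔
        n ∉ ({1, 2, 3, 4, 6, 7, 8, 12} : Set ℕ) :=
  fun n => SetLike.ext_iff.mp closure_stongDegrees n
end

section
/- Let k ≥ 2 and let n₁,…,n_k be natural numbers. In the polynomial ring (ℤ/2ℤ)[a₁,…,a_k, e], let I be the ideal generated by a₁^{n₁+1},…,a_k^{n_k+1} and the product ∏_{i=1}^{k}(a_i + e). Then the degree-1 polynomial n₁·a₁ + ⋯ + n_k·a_k + k·e (coefficients reduced mod 2) belongs to I if and only if k is even and every n_i is even. -/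
/-!
Test membership in the ideal by evaluating at the dual-number point `Pi.single v ε`, which
sends one generator to `ε` and the others to `0`. All values have zero real part, so any product
of two of them vanishes: this kills `∏ᵢ (aᵢ + e)` (as `k ≥ 2`) and every `aᵢ^{nᵢ+1}`, provided
`nᵢ ≠ 0` whenever `aᵢ` is the chosen generator. Members of the ideal therefore vanish at the
point, while `∑ nᵢ aᵢ + k e` takes the value `c • ε`, with `c` its coefficient of the chosen
generator. Choosing `aⱼ` with `nⱼ ≠ 0`, or `e`, shows that every coefficient is even.
-/

open MvPolynomial DualNumber

namespace DualNumber

variable {R : Type*} [CommSemiring R]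

theorem mul_eq_zero_of_fst_eq_zero {x y : R[ε]} (hx : x.fst = 0) (hy : y.fst = 0) :
    x * y = 0 := by
  ext <;> simp [hx, hy]

theorem prod_eq_zero_of_fst_eq_zero {ι : Type*} {s : Finset ι} (hs : 2 ≤ s.card)
    {f : ι → R[ε]} (hf : ∀ i ∈ s, (f i).fst = 0) : ∏ i ∈ s, f i = 0 := by
  classical
  obtain ⟨i, hi, j, hj, hij⟩ := Finset.one_lt_card.mp hs
  rw [← Finset.mul_prod_erase s f hi,
    ← Finset.mul_prod_erase _ f (Finset.mem_erase.mpr ⟨hij.symm, hj⟩), ← mul_assoc,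
    mul_eq_zero_of_fst_eq_zero (hf i hi) (hf j hj), zero_mul]

theorem pow_eq_zero_of_fst_eq_zero {x : R[ε]} (hx : x.fst = 0) {m : ℕ} (hm : 2 ≤ m) :
    x ^ m = 0 :=
  pow_eq_zero_of_le hm (by rw [sq]; exact mul_eq_zero_of_fst_eq_zero hx hx)

theorem smul_eps_eq_zero_iff {r : R} : r • (ε : R[ε]) = 0 ↔ r = 0 :=
  ⟨fun h => by simpa using congrArg TrivSqZeroExt.snd h, fun h => by rw [h, zero_smul]⟩

end DualNumber

/-- `H*(ℝP(n₁,…,n_k); ℤ₂)` is the quotient by this ideal, with `aᵢ = X i.castSucc` and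
`e = X (Fin.last k)`. -/
noncomputable def stongIdeal (k : ℕ) (n : Fin k → ℕ) :
    Ideal (MvPolynomial (Fin (k + 1)) (ZMod 2)) :=
  Ideal.span ((Set.range fun i : Fin k => (X i.castSucc) ^ (n i + 1)) ∪
    {∏ i : Fin k, (X i.castSucc + X (Fin.last k))})

/-- The first Stiefel–Whitney class `∑ nᵢ aᵢ + k e` of `ℝP(n₁,…,n_k)`. -/
noncomputable def stongW1 (k : ℕ) (n : Fin k → ℕ) : MvPolynomial (Fin (k + 1)) (ZMod 2) :=
  ∑ i : Fin k, (n i : ZMod 2) • X i.castSucc + (k : ZMod 2) • X (Fin.last k)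

section Stong

variable {k : ℕ} {n : Fin k → ℕ}

theorem aeval_single_eps_eq_zero_of_mem_stongIdeal (hk : 2 ≤ k) {v : Fin (k + 1)}
    (hv : ∀ i, i.castSucc = v → n i ≠ 0) {p : MvPolynomial (Fin (k + 1)) (ZMod 2)}
    (hp : p ∈ stongIdeal k n) : aeval (Pi.single v ε : _ → (ZMod 2)[ε]) p = 0 := by
  have hfst (w : Fin (k + 1)) : ((Pi.single v ε : Fin (k + 1) → (ZMod 2)[ε]) w).fst = 0 := by
    by_cases h : w = v <;> simp [h]
  refine (Ideal.span_le (I := RingHom.ker (aeval (Pi.single v ε : _ → (ZMod 2)[ε])))).mpr ?_ hp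
  rintro q (⟨i, rfl⟩ | rfl) <;>
    simp only [SetLike.mem_coe, RingHom.mem_ker, map_pow, map_prod, map_add, aeval_X]
  · by_cases hi : i.castSucc = v
    · exact pow_eq_zero_of_fst_eq_zero (hfst _) (by have := hv i hi; omega)
    · simp [Pi.single_eq_of_ne hi]
  · exact prod_eq_zero_of_fst_eq_zero (by simpa using hk) fun i _ => by simp [hfst]

theorem aeval_single_castSucc_eps_stongW1 (j : Fin k) :
    aeval (Pi.single j.castSucc ε : _ → (ZMod 2)[ε]) (stongW1 k n) = (n j : ZMod 2) • ε := by
  simp [stongW1, Pi.single_apply, Fin.castSucc_inj, (Fin.castSucc_lt_last j).ne']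

theorem aeval_single_last_eps_stongW1 :
    aeval (Pi.single (Fin.last k) ε : _ → (ZMod 2)[ε]) (stongW1 k n) = (k : ZMod 2) • ε := by
  simp [stongW1, (Fin.castSucc_lt_last _).ne]

theorem even_of_stongW1_mem_stongIdeal (hk : 2 ≤ k) (h : stongW1 k n ∈ stongIdeal k n)
    (j : Fin k) : Even (n j) := by
  rcases eq_or_ne (n j) 0 with hj | hj
  · exact hj ▸ Even.zero
  have hv : ∀ i : Fin k, i.castSucc = j.castSucc → n i ≠ 0 := fun i hi =>
    Fin.castSucc_inj.mp hi ▸ hj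
  have := aeval_single_eps_eq_zero_of_mem_stongIdeal hk hv h
  rwa [aeval_single_castSucc_eps_stongW1, smul_eps_eq_zero_iff,
    ZMod.natCast_eq_zero_iff_even] at this

theorem even_card_of_stongW1_mem_stongIdeal (hk : 2 ≤ k) (h : stongW1 k n ∈ stongIdeal k n) :
    Even k := by
  have hv : ∀ i : Fin k, i.castSucc = Fin.last k → n i ≠ 0 := fun i hi =>
    absurd hi (Fin.castSucc_lt_last i).ne
  have := aeval_single_eps_eq_zero_of_mem_stongIdeal hk hv h
  rwa [aeval_single_last_eps_stongW1, smul_eps_eq_zero_iff,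
    ZMod.natCast_eq_zero_iff_even] at this

theorem stongW1_eq_zero (hk : Even k) (hn : ∀ i, Even (n i)) : stongW1 k n = 0 := by
  simp [stongW1, ZMod.natCast_eq_zero_iff_even.mpr hk,
    fun i => ZMod.natCast_eq_zero_iff_even.mpr (hn i)]

end Stong

/-- Let `k ≥ 2` and `n₁,…,n_k ∈ ℕ`. In `(ℤ/2ℤ)[a₁,…,a_k,e]` (realized as
`MvPolynomial (Fin (k+1)) (ZMod 2)` with `aᵢ = X i` for `i < k` and `e = X (Fin.last k)`),
let `I` be the ideal generated by `a₁^{n₁+1},…,a_k^{n_k+1}` and `∏ᵢ (aᵢ + e)`. Then the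
degree-one polynomial `n₁·a₁ + ⋯ + n_k·a_k + k·e` (coefficients reduced mod 2) belongs to
`I` if and only if `k` is even and every `nᵢ` is even. -/
theorem stmt10 (k : ℕ) (hk : 2 ≤ k) (n : Fin k → ℕ) :
    (∑ i : Fin k, ((n i : ZMod 2) •
          (X i.castSucc : MvPolynomial (Fin (k + 1)) (ZMod 2))) +
        (k : ZMod 2) • (X (Fin.last k) : MvPolynomial (Fin (k + 1)) (ZMod 2)) ∈
      Ideal.span
        ((Set.range fun i : Fin k =>
            (X i.castSucc : MvPolynomial (Fin (k + 1)) (ZMod 2)) ^ (n i + 1)) ∪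
          {∏ i : Fin k,
            ((X i.castSucc : MvPolynomial (Fin (k + 1)) (ZMod 2)) + X (Fin.last k))})) ↔
      (Even k ∧ ∀ i : Fin k, Even (n i)) := by
  change stongW1 k n ∈ stongIdeal k n ↔ _
  refine ⟨fun h => ⟨even_card_of_stongW1_mem_stongIdeal hk h,
    even_of_stongW1_mem_stongIdeal hk h⟩, fun ⟨hke, hn⟩ => ?_⟩
  rw [stongW1_eq_zero hke hn]
  exact zero_mem _
end
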